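/- (Strict Nash equilibria are pure and characterized by strict advantage gaps) In any n-agent tabular discounted MDP with direct distributed parameterization and d_θ(s) > 0 for all feasible θ and s, every strict Nash equilibrium θ* is deterministic: for each agent i and state s there is a unique action a_i*(s) with θ*_{s,a_i} = 1{a_i = a_i*(s)}. Moreover Ā_i^{θ*}(s, a_i*(s)) = 0 and Ā_i^{θ*}(s, a_i) < 0 for all a_i ≠ a_i*(s). -/

import Mathlib

open Finset

namespace MAMDP

variable {n : ℕ} {S : Type} [Fintype S] [DecidableEq S]
  {A : Fin n → Type} [∀ i, Fintype (A i)] [∀ i, DecidableEq (A i)]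

/-- Joint product policy probability. -/
def jointPi (θ : ∀ i, S → A i → ℝ) (s : S) (a : ∀ i, A i) : ℝ :=
  ∏ i, θ i s (a i)

/-- One-step evolution of a state distribution under the joint policy. -/
def stepDist (P : S → (∀ i, A i) → S → ℝ) (θ : ∀ i, S → A i → ℝ) (μ : S → ℝ) : S → ℝ :=
  fun s' => ∑ s, ∑ a, μ s * jointPi θ s a * P s a s'

/-- State distribution after `t` steps, starting from `μ`. -/
def visit (P : S → (∀ i, A i) → S → ℝ) (θ : ∀ i, S → A i → ℝ) (t : ℕ) (μ : S → ℝ) : S → ℝ :=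
  (stepDist P θ)^[t] μ

/-- Point mass at `s0`. -/
def deltaDist (s0 : S) : S → ℝ := fun s => if s = s0 then 1 else 0

/-- Discounted state visitation distribution `d_θ` for initial distribution `ρ`. -/
noncomputable def dvisit (P : S → (∀ i, A i) → S → ℝ) (θ : ∀ i, S → A i → ℝ) (γ : ℝ)
    (ρ : S → ℝ) (s : S) : ℝ :=
  (1 - γ) * ∑' t : ℕ, γ ^ t * visit P θ t ρ s

/-- Expected one-step reward at state `s` under the joint policy. -/
def expRew (rw : S → (∀ i, A i) → ℝ) (θ : ∀ i, S → A i → ℝ) (s : S) : ℝ :=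
  ∑ a, jointPi θ s a * rw s a

/-- Value function: expected discounted sum of rewards starting from state `s`. -/
noncomputable def Vval (P : S → (∀ i, A i) → S → ℝ) (θ : ∀ i, S → A i → ℝ) (γ : ℝ)
    (rw : S → (∀ i, A i) → ℝ) (s : S) : ℝ :=
  ∑' t : ℕ, γ ^ t * ∑ s', visit P θ t (deltaDist s) s' * expRew rw θ s'

/-- Q-function. -/
noncomputable def Qval (P : S → (∀ i, A i) → S → ℝ) (θ : ∀ i, S → A i → ℝ) (γ : ℝ)
    (rw : S → (∀ i, A i) → ℝ) (s : S) (a : ∀ i, A i) : ℝ :=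
  rw s a + γ * ∑ s', P s a s' * Vval P θ γ rw s'

/-- Total discounted reward `J` under initial distribution `ρ`. -/
noncomputable def Jval (P : S → (∀ i, A i) → S → ℝ) (θ : ∀ i, S → A i → ℝ) (γ : ℝ)
    (rw : S → (∀ i, A i) → ℝ) (ρ : S → ℝ) : ℝ :=
  ∑ s, ρ s * Vval P θ γ rw s

/-- Averaged Q-function of agent `i`: average of `Q(s, a)` with `a i = ai` fixed,
weighted by the other agents' policies. -/
noncomputable def Qbar (P : S → (∀ i, A i) → S → ℝ) (θ : ∀ i, S → A i → ℝ) (γ : ℝ)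
    (rw : S → (∀ i, A i) → ℝ) (i : Fin n) (s : S) (ai : A i) : ℝ :=
  ∑ a : ∀ j, A j, if a i = ai then
    (∏ j ∈ Finset.univ.erase i, θ j s (a j)) * Qval P θ γ rw s a else 0

/-- Averaged advantage function of agent `i`. -/
noncomputable def Abar (P : S → (∀ i, A i) → S → ℝ) (θ : ∀ i, S → A i → ℝ) (γ : ℝ)
    (rw : S → (∀ i, A i) → ℝ) (i : Fin n) (s : S) (ai : A i) : ℝ :=
  Qbar P θ γ rw i s ai - Vval P θ γ rw s

/-- Entries of the policy gradient `∇_{θ_i} J_i(θ)`: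
`(1/(1-γ)) d_θ(s) Q̄_i^θ(s, a_i)`. -/
noncomputable def gradJ (P : S → (∀ i, A i) → S → ℝ) (θ : ∀ i, S → A i → ℝ) (γ : ℝ)
    (rw : S → (∀ i, A i) → ℝ) (ρ : S → ℝ) (i : Fin n) (s : S) (ai : A i) : ℝ :=
  (1 / (1 - γ)) * dvisit P θ γ ρ s * Qbar P θ γ rw i s ai

/-- Feasibility of agent `i`'s parameters: a point of `Δ(A_i)^{|S|}`. -/
def feasibleAgent (i : Fin n) (θi : S → A i → ℝ) : Prop :=
  ∀ s, (∀ a, 0 ≤ θi s a) ∧ ∑ a, θi s a = 1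

/-- Feasibility of a joint parameter `θ ∈ X = ∏_i Δ(A_i)^{|S|}`. -/
def feasible (θ : ∀ i, S → A i → ℝ) : Prop := ∀ i, feasibleAgent i (θ i)

/-- `P` is a transition kernel. -/
def stochMat (P : S → (∀ i, A i) → S → ℝ) : Prop :=
  ∀ s a, (∀ s', 0 ≤ P s a s') ∧ ∑ s', P s a s' = 1

/-- `ρ` is a probability distribution on states. -/
def initDist (ρ : S → ℝ) : Prop := (∀ s, 0 ≤ ρ s) ∧ ∑ s, ρ s = 1

/-- Nash equilibrium. -/
def isNE (P : S → (∀ i, A i) → S → ℝ) (γ : ℝ) (r : Fin n → S → (∀ i, A i) → ℝ)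
    (ρ : S → ℝ) (θ : ∀ i, S → A i → ℝ) : Prop :=
  feasible θ ∧ ∀ (i : Fin n) (θi' : S → A i → ℝ), feasibleAgent i θi' →
    Jval P (Function.update θ i θi') γ (r i) ρ ≤ Jval P θ γ (r i) ρ

/-- Strict Nash equilibrium. -/
def strictNE (P : S → (∀ i, A i) → S → ℝ) (γ : ℝ) (r : Fin n → S → (∀ i, A i) → ℝ)
    (ρ : S → ℝ) (θ : ∀ i, S → A i → ℝ) : Prop :=
  feasible θ ∧ ∀ (i : Fin n) (θi' : S → A i → ℝ), feasibleAgent i θi' → θi' ≠ θ i →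
    Jval P (Function.update θ i θi') γ (r i) ρ < Jval P θ γ (r i) ρ

/-- Markov potential game with potential `φ`. -/
def isPotential (P : S → (∀ i, A i) → S → ℝ) (γ : ℝ) (r : Fin n → S → (∀ i, A i) → ℝ)
    (φ : S → (∀ i, A i) → ℝ) : Prop :=
  ∀ (θ : ∀ i, S → A i → ℝ), feasible θ → ∀ (i : Fin n) (θi' : S → A i → ℝ),
    feasibleAgent i θi' → ∀ s,
    Vval P (Function.update θ i θi') γ (r i) s - Vval P θ γ (r i) s
      = Vval P (Function.update θ i θi') γ φ s - Vval P θ γ φ s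

/-- Squared Euclidean distance between two joint parameters. -/
def polNormSq (x y : ∀ i, S → A i → ℝ) : ℝ :=
  ∑ i, ∑ s, ∑ a, (x i s a - y i s a) ^ 2

/-- The deterministic (pure) joint policy picking `astar i s`. -/
def purePol (astar : ∀ i : Fin n, S → A i) : ∀ i, S → A i → ℝ :=
  fun i s a => if a = astar i s then 1 else 0

end MAMDP

open MAMDP

/-!
By the performance difference lemma, if agent `i` deviates from `θ` to `θ'ᵢ`, then `Jᵢ` changes by
`(1 - γ)⁻¹ ∑ₛ d'(s) ∑ₐ θ'ᵢ(a | s) Āᵢ(s, a)`, where `d' ≥ 0` is the visitation distribution of the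
deviated profile, and `∑ₐ θᵢ(a | s) Āᵢ(s, a) = 0` because `Vᵢ(s) = ∑ₐ θᵢ(a | s) Q̄ᵢ(s, a)`.
Hence an action `a*(s)` maximising `Q̄ᵢ(s, ·)` has `Āᵢ(s, a*(s)) ≥ 0`, and deviating to the pure
policy `a*` does not decrease `Jᵢ`; at a strict equilibrium this is only possible if `θ*ᵢ` already
is that pure policy, and then `Āᵢ(s, a*(s)) = 0`. Every other action `a` has `Āᵢ(s, a) ≤ 0`; if
equality held, moving all mass at `s` to `a` would leave `Jᵢ` unchanged, contradicting strictness.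
-/

namespace MAMDP

open Finset

theorem sum_mul_le_of_le {ι : Type*} [Fintype ι] {w f : ι → ℝ} {C : ℝ} (hw0 : ∀ x, 0 ≤ w x)
    (hw1 : ∑ x, w x = 1) (hf : ∀ x, f x ≤ C) : ∑ x, w x * f x ≤ C :=
  calc ∑ x, w x * f x ≤ ∑ x, w x * C :=
        sum_le_sum fun x _ => mul_le_mul_of_nonneg_left (hf x) (hw0 x)
    _ = C := by rw [← sum_mul, hw1, one_mul]

section Policies

variable {n : ℕ} {S : Type} {A : Fin n → Type} {θ : ∀ i, S → A i → ℝ}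

theorem jointPi_update (i : Fin n) (θi' : S → A i → ℝ) (s : S) (a : ∀ j, A j) :
    jointPi (Function.update θ i θi') s a = θi' s (a i) * ∏ j ∈ univ.erase i, θ j s (a j) := by
  rw [jointPi, ← mul_prod_erase univ _ (mem_univ i), Function.update_self]
  congr 1
  exact prod_congr rfl fun j hj => by rw [Function.update_of_ne (mem_erase.mp hj).1]

variable [∀ i, Fintype (A i)]

theorem jointPi_nonneg (hθ : feasible θ) (s : S) (a : ∀ i, A i) : 0 ≤ jointPi θ s a :=
  prod_nonneg fun i _ => (hθ i s).1 (a i)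

theorem sum_jointPi (hθ : feasible θ) (s : S) : ∑ a, jointPi θ s a = 1 := by
  simp only [jointPi, ← Fintype.prod_sum, (hθ _ s).2, prod_const_one]

theorem feasible.update (hθ : feasible θ) {i : Fin n} {θi' : S → A i → ℝ}
    (hθi' : feasibleAgent i θi') : feasible (Function.update θ i θi') := by
  intro j
  rcases eq_or_ne j i with rfl | hj
  · rwa [Function.update_self]
  · rw [Function.update_of_ne hj]
    exact hθ j

theorem feasibleAgent.nonempty {i : Fin n} {θi : S → A i → ℝ} (h : feasibleAgent i θi) (s : S) :
    Nonempty (A i) := by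
  by_contra hA
  rw [not_nonempty_iff] at hA
  simpa using (h s).2

variable [∀ i, DecidableEq (A i)]

theorem feasibleAgent_purePol (astar : ∀ i : Fin n, S → A i) (i : Fin n) :
    feasibleAgent i (purePol astar i) :=
  fun s => ⟨fun a => by unfold purePol; positivity, by simp [purePol]⟩

theorem feasibleAgent.update_pure [DecidableEq S] {i : Fin n} {θi : S → A i → ℝ}
    (h : feasibleAgent i θi) (s : S) (a : A i) :
    feasibleAgent i (Function.update θi s fun b => if b = a then 1 else 0) := by
  intro t
  rcases eq_or_ne t s with rfl | ht
  · simp only [Function.update_self]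
    exact ⟨fun b => by positivity, by simp⟩
  · simpa only [Function.update_of_ne ht] using h t

end Policies

section MarkovChain

variable {n : ℕ} {S : Type} [Fintype S] {A : Fin n → Type} [∀ i, Fintype (A i)]
  {P : S → (∀ i, A i) → S → ℝ} {θ : ∀ i, S → A i → ℝ} {γ : ℝ} {μ : S → ℝ}

theorem initDist.le_one (hμ : initDist μ) (s : S) : μ s ≤ 1 :=
  hμ.2 ▸ single_le_sum (fun s _ => hμ.1 s) (mem_univ s)

theorem initDist.stepDist (hμ : initDist μ) (hP : stochMat P) (hθ : feasible θ) :
    initDist (stepDist P θ μ) := by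
  refine ⟨fun s' => sum_nonneg fun s _ => sum_nonneg fun a _ =>
    mul_nonneg (mul_nonneg (hμ.1 s) (jointPi_nonneg hθ s a)) ((hP s a).1 s'), ?_⟩
  calc ∑ s', ∑ s, ∑ a, μ s * jointPi θ s a * P s a s'
      = ∑ s, ∑ a, μ s * jointPi θ s a * ∑ s', P s a s' := by
        rw [sum_comm]; simp_rw [mul_sum]; exact sum_congr rfl fun s _ => sum_comm
    _ = 1 := by simp [(hP _ _).2, ← mul_sum, sum_jointPi hθ, hμ.2]

theorem visit_succ (t : ℕ) (μ : S → ℝ) : visit P θ (t + 1) μ = visit P θ t (stepDist P θ μ) :=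
  Function.iterate_succ_apply _ _ _

theorem visit_succ' (t : ℕ) (μ : S → ℝ) : visit P θ (t + 1) μ = stepDist P θ (visit P θ t μ) :=
  Function.iterate_succ_apply' _ _ _

theorem initDist.visit (hμ : initDist μ) (hP : stochMat P) (hθ : feasible θ) (t : ℕ) :
    initDist (visit P θ t μ) := by
  induction t with
  | zero => exact hμ
  | succ t ih => rw [visit_succ']; exact ih.stepDist hP hθ

theorem summable_discounted_visit (hP : stochMat P) (hθ : feasible θ) (hγ0 : 0 ≤ γ) (hγ1 : γ < 1)
    (hμ : initDist μ) (s : S) : Summable fun t => γ ^ t * visit P θ t μ s :=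
  (summable_geometric_of_lt_one hγ0 hγ1).of_nonneg_of_le
    (fun t => mul_nonneg (pow_nonneg hγ0 t) ((hμ.visit hP hθ t).1 s))
    (fun t => mul_le_of_le_one_right (pow_nonneg hγ0 t) ((hμ.visit hP hθ t).le_one s))

theorem summable_discounted_inner (hP : stochMat P) (hθ : feasible θ) (hγ0 : 0 ≤ γ) (hγ1 : γ < 1)
    (hμ : initDist μ) (f : S → ℝ) :
    Summable fun t => γ ^ t * ∑ s, visit P θ t μ s * f s := by
  simp_rw [mul_sum, ← mul_assoc]
  exact summable_sum fun s _ => (summable_discounted_visit hP hθ hγ0 hγ1 hμ s).mul_right (f s)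

theorem tsum_discounted_inner (hP : stochMat P) (hθ : feasible θ) (hγ0 : 0 ≤ γ) (hγ1 : γ < 1)
    (hμ : initDist μ) (f : S → ℝ) :
    ∑' t, γ ^ t * ∑ s, visit P θ t μ s * f s = ∑ s, (∑' t, γ ^ t * visit P θ t μ s) * f s := by
  simp_rw [mul_sum, ← mul_assoc, ← tsum_mul_right]
  exact Summable.tsum_finsetSum fun s _ =>
    (summable_discounted_visit hP hθ hγ0 hγ1 hμ s).mul_right (f s)

theorem dvisit_nonneg (hP : stochMat P) (hθ : feasible θ) (hγ0 : 0 ≤ γ) (hγ1 : γ < 1)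
    {ρ : S → ℝ} (hρ : initDist ρ) (s : S) : 0 ≤ dvisit P θ γ ρ s :=
  mul_nonneg (by linarith)
    (tsum_nonneg fun t => mul_nonneg (pow_nonneg hγ0 t) ((hρ.visit hP hθ t).1 s))

variable [DecidableEq S] {rw : S → (∀ i, A i) → ℝ}

theorem deltaDist_initDist (s₀ : S) : initDist (deltaDist s₀) :=
  ⟨fun s => by unfold deltaDist; positivity, by simp [deltaDist]⟩

theorem stepDist_deltaDist (s s' : S) :
    stepDist P θ (deltaDist s) s' = ∑ a, jointPi θ s a * P s a s' := by
  simp [stepDist, deltaDist, ite_mul]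

theorem stepDist_eq_sum_deltaDist (μ : S → ℝ) (s' : S) :
    stepDist P θ μ s' = ∑ s, μ s * stepDist P θ (deltaDist s) s' := by
  simp only [stepDist_deltaDist, mul_sum, ← mul_assoc]
  rfl

theorem visit_eq_sum_deltaDist (t : ℕ) (μ : S → ℝ) (s' : S) :
    visit P θ t μ s' = ∑ s, μ s * visit P θ t (deltaDist s) s' := by
  induction t generalizing μ with
  | zero => simp [visit, deltaDist]
  | succ t ih =>
    simp only [visit_succ, ih (stepDist P θ _), stepDist_eq_sum_deltaDist μ, sum_mul, mul_sum]
    rw [sum_comm]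
    exact sum_congr rfl fun _ _ => sum_congr rfl fun _ _ => mul_assoc _ _ _

theorem Vval_eq_sum_jointPi_mul_Qval (hP : stochMat P) (hθ : feasible θ) (hγ0 : 0 ≤ γ)
    (hγ1 : γ < 1) (s : S) : Vval P θ γ rw s = ∑ a, jointPi θ s a * Qval P θ γ rw s a := by
  set X : S → ℕ → ℝ := fun s t => γ ^ t * ∑ s', visit P θ t (deltaDist s) s' * expRew rw θ s'
  have hX : ∀ s, Summable (X s) := fun s =>
    summable_discounted_inner hP hθ hγ0 hγ1 (deltaDist_initDist s) _
  have hstep : ∀ t, X s (t + 1) = γ * ∑ s₁, stepDist P θ (deltaDist s) s₁ * X s₁ t := by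
    intro t
    simp only [X, visit_succ, visit_eq_sum_deltaDist t (stepDist P θ _), sum_mul, mul_sum]
    rw [sum_comm]
    exact sum_congr rfl fun _ _ => sum_congr rfl fun _ _ => by ring
  calc Vval P θ γ rw s = X s 0 + ∑' t, X s (t + 1) := (hX s).tsum_eq_zero_add
    _ = expRew rw θ s + γ * ∑ s₁, stepDist P θ (deltaDist s) s₁ * Vval P θ γ rw s₁ := by
      simp_rw [hstep, tsum_mul_left, Summable.tsum_finsetSum fun s₁ _ => (hX s₁).mul_left _,
        tsum_mul_left]
      simp [X, visit, deltaDist, Vval]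
    _ = ∑ a, jointPi θ s a * Qval P θ γ rw s a := by
      simp only [Qval, expRew, stepDist_deltaDist, mul_add, sum_add_distrib, sum_mul, mul_sum]
      rw [sum_comm (γ := S)]
      congr 1
      exact sum_congr rfl fun _ _ => sum_congr rfl fun _ _ => by ring

variable {θ' : ∀ i, S → A i → ℝ}

/-- `𝔼_{a ∼ θ'(s)} A^θ(s, a)`: the advantage of `θ` averaged over the actions of `θ'`. -/
noncomputable def relAdv (P : S → (∀ i, A i) → S → ℝ) (θ θ' : ∀ i, S → A i → ℝ) (γ : ℝ)
    (rw : S → (∀ i, A i) → ℝ) (s : S) : ℝ :=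
  ∑ a, jointPi θ' s a * Qval P θ γ rw s a - Vval P θ γ rw s

theorem Vval_sub_Vval_eq (hP : stochMat P) (hθ' : feasible θ') (hγ0 : 0 ≤ γ) (hγ1 : γ < 1)
    (s : S) :
    Vval P θ' γ rw s - Vval P θ γ rw s = relAdv P θ θ' γ rw s
      + γ * ∑ a, jointPi θ' s a * ∑ s₁, P s a s₁ * (Vval P θ' γ rw s₁ - Vval P θ γ rw s₁) := by
  rw [Vval_eq_sum_jointPi_mul_Qval hP hθ' hγ0 hγ1 s]
  simp only [relAdv, Qval, mul_sub, sum_sub_distrib, mul_add, sum_add_distrib, mul_sum,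
    mul_left_comm _ γ]
  ring

theorem sum_mul_Vval_sub_Vval_eq (hP : stochMat P) (hθ' : feasible θ') (hγ0 : 0 ≤ γ)
    (hγ1 : γ < 1) (μ : S → ℝ) :
    ∑ s, μ s * (Vval P θ' γ rw s - Vval P θ γ rw s) = ∑ s, μ s * relAdv P θ θ' γ rw s
      + γ * ∑ s, stepDist P θ' μ s * (Vval P θ' γ rw s - Vval P θ γ rw s) := by
  rw [sum_congr rfl fun s _ => congrArg (μ s * ·) (Vval_sub_Vval_eq hP hθ' hγ0 hγ1 s)]
  simp only [stepDist, mul_add, sum_add_distrib, mul_sum, sum_mul]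
  congr 1
  conv_rhs => rw [sum_comm]
  refine sum_congr rfl fun _ _ => ?_
  rw [sum_comm]
  exact sum_congr rfl fun _ _ => sum_congr rfl fun _ _ => by ring

theorem sum_mul_Vval_sub_Vval_eq_sum_range (hP : stochMat P) (hθ' : feasible θ') (hγ0 : 0 ≤ γ)
    (hγ1 : γ < 1) (μ : S → ℝ) (T : ℕ) :
    ∑ s, μ s * (Vval P θ' γ rw s - Vval P θ γ rw s)
      = ∑ t ∈ range T, γ ^ t * ∑ s, visit P θ' t μ s * relAdv P θ θ' γ rw s
        + γ ^ T * ∑ s, visit P θ' T μ s * (Vval P θ' γ rw s - Vval P θ γ rw s) := by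
  induction T with
  | zero => simp [visit]
  | succ T ih =>
    rw [ih, sum_mul_Vval_sub_Vval_eq hP hθ' hγ0 hγ1 (visit P θ' T μ), sum_range_succ,
      ← visit_succ']
    ring

/-- The performance difference lemma. -/
theorem Jval_sub_Jval_eq (hP : stochMat P) (hθ' : feasible θ') (hγ0 : 0 ≤ γ) (hγ1 : γ < 1)
    {ρ : S → ℝ} (hρ : initDist ρ) :
    Jval P θ' γ rw ρ - Jval P θ γ rw ρ
      = (1 - γ)⁻¹ * ∑ s, dvisit P θ' γ ρ s * relAdv P θ θ' γ rw s := by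
  have hsum := summable_discounted_inner hP hθ' hγ0 hγ1 hρ (relAdv P θ θ' γ rw)
  have htail := (summable_discounted_inner hP hθ' hγ0 hγ1 hρ
    fun s => Vval P θ' γ rw s - Vval P θ γ rw s).tendsto_atTop_zero
  have hlim : ∑ s, ρ s * (Vval P θ' γ rw s - Vval P θ γ rw s)
      = ∑' t, γ ^ t * ∑ s, visit P θ' t ρ s * relAdv P θ θ' γ rw s := by
    refine tendsto_nhds_unique ?_ hsum.hasSum.tendsto_sum_nat
    have h := (tendsto_const_nhds
      (x := ∑ s, ρ s * (Vval P θ' γ rw s - Vval P θ γ rw s))).sub htail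
    rw [sub_zero] at h
    refine h.congr fun T => ?_
    rw [sum_mul_Vval_sub_Vval_eq_sum_range hP hθ' hγ0 hγ1 ρ T]
    ring
  have hγ : (1 - γ) ≠ 0 := by linarith
  rw [Jval, Jval, ← sum_sub_distrib]
  simp_rw [← mul_sub, hlim, tsum_discounted_inner hP hθ' hγ0 hγ1 hρ, dvisit, mul_assoc,
    ← mul_sum, inv_mul_cancel_left₀ hγ]

variable [∀ i, DecidableEq (A i)]

theorem sum_jointPi_update_mul_Qval (i : Fin n) (θi' : S → A i → ℝ) (s : S) :
    ∑ a, jointPi (Function.update θ i θi') s a * Qval P θ γ rw s a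
      = ∑ ai, θi' s ai * Qbar P θ γ rw i s ai := by
  simp only [Qbar, mul_sum, mul_ite, mul_zero]
  rw [sum_comm]
  refine sum_congr rfl fun a _ => ?_
  rw [jointPi_update, sum_ite_eq, if_pos (mem_univ _), mul_assoc]

theorem Vval_eq_sum_mul_Qbar (hP : stochMat P) (hθ : feasible θ) (hγ0 : 0 ≤ γ) (hγ1 : γ < 1)
    (i : Fin n) (s : S) : Vval P θ γ rw s = ∑ ai, θ i s ai * Qbar P θ γ rw i s ai := by
  rw [Vval_eq_sum_jointPi_mul_Qval hP hθ hγ0 hγ1, ← sum_jointPi_update_mul_Qval,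
    Function.update_eq_self]

theorem sum_mul_Abar_eq_zero (hP : stochMat P) (hθ : feasible θ) (hγ0 : 0 ≤ γ) (hγ1 : γ < 1)
    (i : Fin n) (s : S) : ∑ ai, θ i s ai * Abar P θ γ rw i s ai = 0 := by
  simp only [Abar, mul_sub, sum_sub_distrib, ← sum_mul, (hθ i s).2, one_mul,
    ← Vval_eq_sum_mul_Qbar hP hθ hγ0 hγ1, sub_self]

theorem Abar_nonneg_of_forall_Qbar_le (hP : stochMat P) (hθ : feasible θ) (hγ0 : 0 ≤ γ)
    (hγ1 : γ < 1) {i : Fin n} {s : S} {a : A i}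
    (hmax : ∀ b, Qbar P θ γ rw i s b ≤ Qbar P θ γ rw i s a) : 0 ≤ Abar P θ γ rw i s a := by
  rw [Abar, sub_nonneg, Vval_eq_sum_mul_Qbar hP hθ hγ0 hγ1 i]
  exact sum_mul_le_of_le (hθ i s).1 (hθ i s).2 hmax

theorem relAdv_update {i : Fin n} {θi' : S → A i → ℝ} (hθi' : feasibleAgent i θi') (s : S) :
    relAdv P θ (Function.update θ i θi') γ rw s = ∑ ai, θi' s ai * Abar P θ γ rw i s ai := by
  simp only [relAdv, Abar, sum_jointPi_update_mul_Qval, mul_sub, sum_sub_distrib, ← sum_mul,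
    (hθi' s).2, one_mul]

theorem Jval_update_sub_Jval_eq (hP : stochMat P) (hθ : feasible θ) (hγ0 : 0 ≤ γ) (hγ1 : γ < 1)
    {ρ : S → ℝ} (hρ : initDist ρ) {i : Fin n} {θi' : S → A i → ℝ} (hθi' : feasibleAgent i θi') :
    Jval P (Function.update θ i θi') γ rw ρ - Jval P θ γ rw ρ
      = (1 - γ)⁻¹ * ∑ s, dvisit P (Function.update θ i θi') γ ρ s
          * ∑ ai, θi' s ai * Abar P θ γ rw i s ai := by
  simp only [Jval_sub_Jval_eq hP (hθ.update hθi') hγ0 hγ1 hρ, relAdv_update hθi']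

variable {r : Fin n → S → (∀ i, A i) → ℝ} {ρ : S → ℝ}

theorem strictNE.eq_purePol (hNE : strictNE P γ r ρ θ) (hP : stochMat P) (hγ0 : 0 ≤ γ)
    (hγ1 : γ < 1) (hρ : initDist ρ) {astar : ∀ i : Fin n, S → A i}
    (hmax : ∀ i s b, Qbar P θ γ (r i) i s b ≤ Qbar P θ γ (r i) i s (astar i s)) :
    θ = purePol astar := by
  funext i
  by_contra hne
  have hlt := hNE.2 i _ (feasibleAgent_purePol astar i) (Ne.symm hne)
  have hgain :
      0 ≤ Jval P (Function.update θ i (purePol astar i)) γ (r i) ρ - Jval P θ γ (r i) ρ := by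
    rw [Jval_update_sub_Jval_eq hP hNE.1 hγ0 hγ1 hρ (feasibleAgent_purePol astar i)]
    refine mul_nonneg (inv_nonneg.2 (by linarith)) (sum_nonneg fun s _ => mul_nonneg
      (dvisit_nonneg hP (hNE.1.update (feasibleAgent_purePol astar i)) hγ0 hγ1 hρ s) ?_)
    simpa [purePol] using Abar_nonneg_of_forall_Qbar_le hP hNE.1 hγ0 hγ1 (hmax i s)
  linarith

theorem strictNE.eq_one_of_Abar_eq_zero (hNE : strictNE P γ r ρ θ) (hP : stochMat P)
    (hγ0 : 0 ≤ γ) (hγ1 : γ < 1) (hρ : initDist ρ) {i : Fin n} {s : S} {a : A i}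
    (h : Abar P θ γ (r i) i s a = 0) : θ i s a = 1 := by
  set θi' := Function.update (θ i) s fun b => if b = a then 1 else 0
  have hθi' : feasibleAgent i θi' := (hNE.1 i).update_pure s a
  have hadv : ∀ t, ∑ ai, θi' t ai * Abar P θ γ (r i) i t ai = 0 := by
    intro t
    rcases eq_or_ne t s with rfl | ht
    · simpa [θi'] using h
    · simpa only [θi', Function.update_of_ne ht] using
        sum_mul_Abar_eq_zero hP hNE.1 hγ0 hγ1 i t
  have hJ : Jval P (Function.update θ i θi') γ (r i) ρ = Jval P θ γ (r i) ρ := by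
    rw [← sub_eq_zero, Jval_update_sub_Jval_eq hP hNE.1 hγ0 hγ1 hρ hθi']
    simp [hadv]
  by_contra hne
  refine (hNE.2 i θi' hθi' fun heq => hne ?_).ne hJ
  simpa [θi'] using (congrFun (congrFun heq s) a).symm

end MarkovChain

end MAMDP

theorem stmt12_general {n : ℕ} {S : Type} [Fintype S] [DecidableEq S]
    {A : Fin n → Type} [∀ i, Fintype (A i)] [∀ i, DecidableEq (A i)]
    (P : S → (∀ i, A i) → S → ℝ) (hP : stochMat P)
    (r : Fin n → S → (∀ i, A i) → ℝ)
    (γ : ℝ) (hγ0 : 0 ≤ γ) (hγ1 : γ < 1)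
    (ρ : S → ℝ) (hρ : initDist ρ)
    (θstar : ∀ i, S → A i → ℝ) (hNE : strictNE P γ r ρ θstar) :
    ∃ astar : ∀ i : Fin n, S → A i,
      (∀ i s a, θstar i s a = if a = astar i s then 1 else 0) ∧
      (∀ i s, Abar P θstar γ (r i) i s (astar i s) = 0) ∧
      (∀ (i : Fin n) (s : S) (a : A i), a ≠ astar i s →
        Abar P θstar γ (r i) i s a < 0) := by
  have hmax : ∀ i s, ∃ a, ∀ b, Qbar P θstar γ (r i) i s b ≤ Qbar P θstar γ (r i) i s a :=
    fun i s => have := (hNE.1 i).nonempty s; Finite.exists_max _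
  choose astar hastar using hmax
  have hpure := hNE.eq_purePol hP hγ0 hγ1 hρ hastar
  have hzero : ∀ i s, Abar P θstar γ (r i) i s (astar i s) = 0 := fun i s => by
    have h := sum_mul_Abar_eq_zero (rw := r i) hP hNE.1 hγ0 hγ1 i s
    rw [show θstar i s = purePol astar i s by rw [hpure]] at h
    simpa [purePol] using h
  refine ⟨astar, fun i s a => by rw [hpure]; rfl, hzero, fun i s a ha => ?_⟩
  refine lt_of_le_of_ne ((sub_le_sub_right (hastar i s a) _).trans_eq (hzero i s)) fun h => ?_
  have h1 := hNE.eq_one_of_Abar_eq_zero hP hγ0 hγ1 hρ h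
  rw [hpure] at h1
  simp [purePol, ha] at h1

/-- Strict Nash equilibria are pure, with zero averaged advantage at the optimal action
and strictly negative averaged advantage at every other action. -/
theorem stmt12 {n : ℕ} {S : Type} [Fintype S] [DecidableEq S]
    {A : Fin n → Type} [∀ i, Fintype (A i)] [∀ i, DecidableEq (A i)]
    (P : S → (∀ i, A i) → S → ℝ) (hP : stochMat P)
    (r : Fin n → S → (∀ i, A i) → ℝ) (hr : ∀ i s a, 0 ≤ r i s a ∧ r i s a ≤ 1)
    (γ : ℝ) (hγ0 : 0 ≤ γ) (hγ1 : γ < 1)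
    (ρ : S → ℝ) (hρ : initDist ρ)
    (hd : ∀ θ : ∀ i, S → A i → ℝ, feasible θ → ∀ s, 0 < dvisit P θ γ ρ s)
    (θstar : ∀ i, S → A i → ℝ) (hNE : strictNE P γ r ρ θstar) :
    ∃ astar : ∀ i : Fin n, S → A i,
      (∀ i s a, θstar i s a = if a = astar i s then 1 else 0) ∧
      (∀ i s, Abar P θstar γ (r i) i s (astar i s) = 0) ∧
      (∀ (i : Fin n) (s : S) (a : A i), a ≠ astar i s →
        Abar P θstar γ (r i) i s a < 0) :=
  stmt12_general P hP r γ hγ0 hγ1 ρ hρ θstar hNE
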